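/- arXiv:1708.01058 — 2 statements merged into one kernel-verified Lean document; each statement's English description precedes it below -/
import Mathlib

section
/- Let V₂(y) = |y|²/2 + 2η ln(1 + |y|²/2) on ℝ^d with η ≥ 0. Then the Hessian of V₂ satisfies, in the sense of quadratic forms, Hess V₂(y) ≥ (1 + 2η/(1+|y|²/2) − 2ηd|y|²/(1+|y|²/2)²) · Id for all y. -/
/-!
`V₂` is radial, `V₂ y = φ ‖y‖²` with `φ t = t/2 + 2η log (1 + t/2)`, so its Hessian is
`2 φ'(‖y‖²) Id + 4 φ''(‖y‖²) y ⊗ y`. Here the rank-one part is `-2η/(1 + ‖y‖²/2)² y ⊗ y ≤ 0`,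
and Cauchy–Schwarz, `⟪y, v⟫² ≤ ‖y‖² ‖v‖² ≤ d ‖y‖² ‖v‖²`, bounds it below by a multiple of the identity.
-/

open Real
open scoped RealInnerProductSpace

section RadialHessian

variable {E : Type*} [NormedAddCommGroup E] [InnerProductSpace ℝ E] {φ φ' : ℝ → ℝ}

theorem hasFDerivAt_comp_norm_sq (hφ : ∀ t, 0 ≤ t → HasDerivAt φ (φ' t) t) (x : E) :
    HasFDerivAt (fun z : E => φ (‖z‖ ^ 2)) ((2 * φ' (‖x‖ ^ 2)) • innerSL ℝ x) x := by
  refine ((hφ _ (sq_nonneg ‖x‖)).comp_hasFDerivAt x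
    (hasStrictFDerivAt_norm_sq x).hasFDerivAt).congr_fderiv ?_
  module

theorem iteratedFDeriv_two_comp_norm_sq_apply (hφ : ∀ t, 0 ≤ t → HasDerivAt φ (φ' t) t)
    {x : E} {φ'' : ℝ} (hφ' : HasDerivAt φ' φ'' (‖x‖ ^ 2)) (v : E) :
    iteratedFDeriv ℝ 2 (fun z : E => φ (‖z‖ ^ 2)) x ![v, v]
      = 2 * φ' (‖x‖ ^ 2) * ‖v‖ ^ 2 + 4 * φ'' * ⟪x, v⟫ ^ 2 := by
  have hgrad : fderiv ℝ (fun z : E => φ (‖z‖ ^ 2)) = fun z => (2 * φ' (‖z‖ ^ 2)) • innerSL ℝ z :=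
    funext fun z => (hasFDerivAt_comp_norm_sq hφ z).fderiv
  have hcoef : HasFDerivAt (fun z : E => 2 * φ' (‖z‖ ^ 2)) ((2 * φ'') • (2 • innerSL ℝ x)) x :=
    (hφ'.const_mul 2).comp_hasFDerivAt (f := fun z : E => ‖z‖ ^ 2) x
      (hasStrictFDerivAt_norm_sq x).hasFDerivAt
  have hinner : HasFDerivAt (fun z : E => innerSL ℝ z) (innerSL ℝ : E →L[ℝ] E →L[ℝ] ℝ) x :=
    (innerSL ℝ : E →L[ℝ] E →L[ℝ] ℝ).hasFDerivAt
  have hhess : HasFDerivAt (fun z : E => (2 * φ' (‖z‖ ^ 2)) • innerSL ℝ z) _ x :=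
    hcoef.smul hinner
  rw [iteratedFDeriv_two_apply, hgrad, hhess.fderiv]
  have hvv : (innerSL ℝ : E →L[ℝ] E →L[ℝ] ℝ) v v = ‖v‖ ^ 2 := real_inner_self_eq_norm_sq v
  simp only [Matrix.cons_val_zero, Matrix.cons_val_one, Matrix.cons_val_fin_one, add_apply,
    smul_apply, ContinuousLinearMap.smulRight_apply, coe_innerSL_apply, hvv, nsmul_eq_mul,
    Nat.cast_ofNat, smul_eq_mul]
  ring

end RadialHessian

theorem hasDerivAt_half_add_mul_log_one_add_half (η : ℝ) {t : ℝ} (ht : 1 + t / 2 ≠ 0) :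
    HasDerivAt (fun s : ℝ => s / 2 + 2 * η * log (1 + s / 2)) (1 / 2 + η / (1 + t / 2)) t := by
  have hlin : HasDerivAt (fun s : ℝ => 1 + s / 2) (1 / 2) t :=
    ((hasDerivAt_id t).div_const 2).const_add 1
  refine ((hasDerivAt_id' (x := t) |>.div_const 2).add
    ((hlin.log ht).const_mul (2 * η))).congr_deriv ?_
  field_simp

theorem hasDerivAt_half_add_div_one_add_half (η : ℝ) {t : ℝ} (ht : 1 + t / 2 ≠ 0) :
    HasDerivAt (fun s : ℝ => 1 / 2 + η / (1 + s / 2)) (-η / (2 * (1 + t / 2) ^ 2)) t := by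
  have hlin : HasDerivAt (fun s : ℝ => 1 + s / 2) (1 / 2) t :=
    ((hasDerivAt_id t).div_const 2).const_add 1
  refine (((hasDerivAt_const t η).div hlin ht).const_add (1 / 2)).congr_deriv ?_
  field_simp
  ring

theorem iteratedFDeriv_two_log_potential_apply {E : Type*} [NormedAddCommGroup E]
    [InnerProductSpace ℝ E] (η : ℝ) (x v : E) :
    iteratedFDeriv ℝ 2 (fun z : E => ‖z‖ ^ 2 / 2 + 2 * η * log (1 + ‖z‖ ^ 2 / 2)) x ![v, v]
      = (1 + 2 * η / (1 + ‖x‖ ^ 2 / 2)) * ‖v‖ ^ 2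
        - 2 * η / (1 + ‖x‖ ^ 2 / 2) ^ 2 * ⟪x, v⟫ ^ 2 := by
  have hpos : ∀ t : ℝ, 0 ≤ t → 1 + t / 2 ≠ 0 := fun t ht => by positivity
  rw [iteratedFDeriv_two_comp_norm_sq_apply
    (fun t ht => hasDerivAt_half_add_mul_log_one_add_half η (hpos t ht))
    (hasDerivAt_half_add_div_one_add_half η (hpos _ (sq_nonneg ‖x‖)))]
  field_simp
  ring

theorem stmt_3 {d : ℕ} (hd : 1 ≤ d) (η : ℝ) (hη : 0 ≤ η)
    (V₂ : EuclideanSpace ℝ (Fin d) → ℝ)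
    (hV : ∀ y, V₂ y = ‖y‖ ^ 2 / 2 + 2 * η * Real.log (1 + ‖y‖ ^ 2 / 2))
    (y v : EuclideanSpace ℝ (Fin d)) :
    iteratedFDeriv ℝ 2 V₂ y ![v, v] ≥
      (1 + 2 * η / (1 + ‖y‖ ^ 2 / 2)
        - 2 * η * d * ‖y‖ ^ 2 / (1 + ‖y‖ ^ 2 / 2) ^ 2) * ‖v‖ ^ 2 := by
  rw [funext hV, iteratedFDeriv_two_log_potential_apply, ge_iff_le]
  have hcs : ⟪y, v⟫ ^ 2 ≤ ‖y‖ ^ 2 * ‖v‖ ^ 2 := by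
    rw [← mul_pow]
    exact sq_le_sq' (neg_le_of_abs_le (abs_real_inner_le_norm y v)) (real_inner_le_norm y v)
  have hdim : ‖y‖ ^ 2 * ‖v‖ ^ 2 ≤ d * ‖y‖ ^ 2 * ‖v‖ ^ 2 := by
    have : (1 : ℝ) ≤ d := by exact_mod_cast hd
    nlinarith [mul_nonneg (sq_nonneg ‖y‖) (sq_nonneg ‖v‖)]
  calc (1 + 2 * η / (1 + ‖y‖ ^ 2 / 2) - 2 * η * d * ‖y‖ ^ 2 / (1 + ‖y‖ ^ 2 / 2) ^ 2) * ‖v‖ ^ 2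
      = (1 + 2 * η / (1 + ‖y‖ ^ 2 / 2)) * ‖v‖ ^ 2
        - 2 * η / (1 + ‖y‖ ^ 2 / 2) ^ 2 * (d * ‖y‖ ^ 2 * ‖v‖ ^ 2) := by ring
    _ ≤ (1 + 2 * η / (1 + ‖y‖ ^ 2 / 2)) * ‖v‖ ^ 2
        - 2 * η / (1 + ‖y‖ ^ 2 / 2) ^ 2 * ⟪y, v⟫ ^ 2 := by
      gcongr
      exact hcs.trans hdim
end

section
/- (Lyapunov function for the weighted generator, corollary construction) Let U : ℝ^d → ℝ be smooth with U ≥ 1 and assume outside a compact set: Δ_x U ≤ κ|∇_x U|² for some κ ∈ (0,1) and |∇_x U|² ≥ c U^{2η+1} for some c > 0. Let H(x,y) = U(x) + |y|²/2 and L_η = H^{-2η}Δ_x + Δ_y − H^{-2η}(2η∇_xH/H + ∇_xH)·∇_x − ∇_yH·∇_y. Then for any α ∈ (0, 1−κ) and β ∈ (0,1), the function W(x,y) = exp(αU(x) + β|y|²/2) satisfies L_η W ≤ −λ H W + b for some constants λ, b > 0. -/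
open Real MeasureTheory
open scoped RealInnerProductSpace

variable {d : ℕ}

/-- Laplacian of `f : ℝ^d → ℝ` as the sum of second partial derivatives. -/
noncomputable def lap (f : EuclideanSpace ℝ (Fin d) → ℝ)
    (x : EuclideanSpace ℝ (Fin d)) : ℝ :=
  ∑ i : Fin d, fderiv ℝ (fun z => fderiv ℝ f z (EuclideanSpace.single i 1)) x
    (EuclideanSpace.single i 1)

/-- gradient in the `x` variable of `f : ℝ^d × ℝ^d → ℝ`. -/
noncomputable def gradX
    (f : EuclideanSpace ℝ (Fin d) × EuclideanSpace ℝ (Fin d) → ℝ)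
    (p : EuclideanSpace ℝ (Fin d) × EuclideanSpace ℝ (Fin d)) :
    EuclideanSpace ℝ (Fin d) :=
  gradient (fun x => f (x, p.2)) p.1

/-- gradient in the `y` variable. -/
noncomputable def gradY
    (f : EuclideanSpace ℝ (Fin d) × EuclideanSpace ℝ (Fin d) → ℝ)
    (p : EuclideanSpace ℝ (Fin d) × EuclideanSpace ℝ (Fin d)) :
    EuclideanSpace ℝ (Fin d) :=
  gradient (fun y => f (p.1, y)) p.2

/-- Hamiltonian `H(x,y) = U(x) + |y|²/2`. -/
noncomputable def Ham (U : EuclideanSpace ℝ (Fin d) → ℝ)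
    (p : EuclideanSpace ℝ (Fin d) × EuclideanSpace ℝ (Fin d)) : ℝ :=
  U p.1 + ‖p.2‖ ^ 2 / 2

/-- the weighted generator
`L_η = H^{-2η}Δ_x + Δ_y − H^{-2η}(2η ∇_x H/H + ∇_x H)·∇_x − ∇_y H·∇_y`,
where `∇_x H = ∇U` and `∇_y H = y`. -/
noncomputable def Leta (η : ℝ) (U : EuclideanSpace ℝ (Fin d) → ℝ)
    (f : EuclideanSpace ℝ (Fin d) × EuclideanSpace ℝ (Fin d) → ℝ)
    (p : EuclideanSpace ℝ (Fin d) × EuclideanSpace ℝ (Fin d)) : ℝ :=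
  Ham U p ^ (-(2 * η)) * lap (fun x => f (x, p.2)) p.1
    + lap (fun y => f (p.1, y)) p.2
    - Ham U p ^ (-(2 * η)) *
        ⟪(2 * η / Ham U p) • gradient U p.1 + gradient U p.1, gradX f p⟫
    - ⟪p.2, gradY f p⟫

section Aux

local notation "E" => EuclideanSpace ℝ (Fin d)

theorem aux_norm_sq_eq_sum (v : E) : ‖v‖^2 = ∑ i, (v i)^2 := by
  rw [EuclideanSpace.norm_eq, Real.sq_sqrt (by positivity)]
  simp [sq_abs]

theorem aux_inner_single (v : E) (i : Fin d) : ⟪v, EuclideanSpace.single i (1:ℝ)⟫ = v i := by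
  simp [EuclideanSpace.inner_single_right]

theorem aux_fderiv_eq_inner_gradient {U : E → ℝ} (hU : ContDiff ℝ (⊤ : ℕ∞) U) (x v : E) :
    fderiv ℝ U x v = ⟪gradient U x, v⟫ := by
  have h := (hU.differentiable (by simp) x).hasGradientAt
  rw [h.hasFDerivAt.fderiv]; simp [InnerProductSpace.toDual_apply_apply]

theorem aux_expX_hasFDerivAt {U : E → ℝ} (hU : ContDiff ℝ (⊤ : ℕ∞) U) (α C : ℝ) (x : E) :
    HasFDerivAt (fun x => Real.exp (α * U x + C))
      (Real.exp (α * U x + C) • (α • fderiv ℝ U x)) x :=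
  (((hU.differentiable (by simp) x).hasFDerivAt.const_mul α).add_const C).exp

theorem aux_lap_expX {U : E → ℝ} (hU : ContDiff ℝ (⊤ : ℕ∞) U) (α C : ℝ) (x : E) :
    lap (fun x => Real.exp (α * U x + C)) x
      = Real.exp (α * U x + C) * (α * lap U x + α^2 * ‖gradient U x‖^2) := by
  have hsm : ∀ i : Fin d, ContDiff ℝ (⊤ : ℕ∞) (fun z : E => fderiv ℝ U z (EuclideanSpace.single i 1)) :=
    fun i => (ContinuousLinearMap.apply ℝ ℝ (EuclideanSpace.single i (1:ℝ))).contDiff.comp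
      (hU.fderiv_right (by simp))
  have key : ∀ i : Fin d,
      fderiv ℝ (fun z => fderiv ℝ (fun x => Real.exp (α * U x + C)) z (EuclideanSpace.single i 1)) x
        (EuclideanSpace.single i 1)
      = Real.exp (α * U x + C) *
          (α * fderiv ℝ (fun z => fderiv ℝ U z (EuclideanSpace.single i 1)) x
            (EuclideanSpace.single i 1))
        + (α * fderiv ℝ U x (EuclideanSpace.single i 1)) *
            (Real.exp (α * U x + C) * (α * fderiv ℝ U x (EuclideanSpace.single i 1))) := by
    intro i
    have hfun : (fun z => fderiv ℝ (fun x => Real.exp (α * U x + C)) z (EuclideanSpace.single i 1))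
        = fun z => Real.exp (α * U z + C) * (α * fderiv ℝ U z (EuclideanSpace.single i 1)) := by
      funext z
      rw [(aux_expX_hasFDerivAt hU α C z).fderiv]
      simp [mul_assoc]
    rw [hfun]
    have hprod := (aux_expX_hasFDerivAt hU α C x).fun_mul
      (((hsm i).differentiable (by simp) x).hasFDerivAt.const_mul α)
    rw [hprod.fderiv]
    simp [mul_assoc, mul_comm]
  unfold lap
  simp only [key]
  rw [Finset.sum_add_distrib, ← Finset.mul_sum, ← Finset.mul_sum]
  have hsum2 : ∑ i : Fin d, (α * fderiv ℝ U x (EuclideanSpace.single i 1)) *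
      (Real.exp (α * U x + C) * (α * fderiv ℝ U x (EuclideanSpace.single i 1)))
      = Real.exp (α * U x + C) * (α^2 * ‖gradient U x‖^2) := by
    rw [aux_norm_sq_eq_sum, Finset.mul_sum, Finset.mul_sum]
    congr 1
    funext i
    rw [aux_fderiv_eq_inner_gradient hU, aux_inner_single]
    ring
  rw [hsum2]
  ring

theorem aux_norm_sq_hasFDerivAt (y : E) :
    HasFDerivAt (fun y : E => ‖y‖^2) ((2:ℝ) • (innerSL ℝ y : E →L[ℝ] ℝ)) y := by
  have h := (hasFDerivAt_id (𝕜 := ℝ) y).inner ℝ (hasFDerivAt_id y)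
  simp only [id_eq] at h
  have hfun : (fun y : E => (⟪y, y⟫ : ℝ)) = fun y : E => ‖y‖^2 := by
    funext z; exact real_inner_self_eq_norm_sq z
  rw [hfun] at h
  refine h.congr_fderiv ?_
  ext v
  simp [real_inner_comm]
  rw [two_mul]

theorem aux_expY_hasFDerivAt (β C : ℝ) (y : E) :
    HasFDerivAt (fun y : E => Real.exp (C + β * ‖y‖^2 / 2))
      (Real.exp (C + β * ‖y‖^2 / 2) • (β • (innerSL ℝ y : E →L[ℝ] ℝ))) y := by
  have h2 : HasFDerivAt (fun y : E => C + β * ‖y‖^2 / 2) (β • (innerSL ℝ y : E →L[ℝ] ℝ)) y := by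
    have h := ((aux_norm_sq_hasFDerivAt y).const_mul (β/2)).const_add C
    have e1 : (fun y : E => C + β/2 * ‖y‖^2) = fun y : E => C + β * ‖y‖^2/2 := by
      funext z; ring
    have e2 : (β/2) • ((2:ℝ) • (innerSL ℝ y : E →L[ℝ] ℝ)) = β • (innerSL ℝ y : E →L[ℝ] ℝ) := by
      rw [smul_smul]; norm_num
    rw [e1, e2] at h; exact h
  exact h2.exp

theorem aux_lap_expY (β C : ℝ) (y : E) :
    lap (fun y => Real.exp (C + β * ‖y‖^2 / 2)) y
      = Real.exp (C + β * ‖y‖^2 / 2) * (β * d + β^2 * ‖y‖^2) := by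
  have key : ∀ i : Fin d,
      fderiv ℝ (fun z => fderiv ℝ (fun y : E => Real.exp (C + β * ‖y‖^2 / 2)) z
          (EuclideanSpace.single i 1)) y (EuclideanSpace.single i 1)
      = Real.exp (C + β * ‖y‖^2 / 2) * β
        + Real.exp (C + β * ‖y‖^2 / 2) * (β^2 * (y i)^2) := by
    intro i
    have hfun : (fun z => fderiv ℝ (fun y : E => Real.exp (C + β * ‖y‖^2 / 2)) z
          (EuclideanSpace.single i 1))
        = fun z : E => Real.exp (C + β * ‖z‖^2 / 2) *
            (β * ((innerSL ℝ (EuclideanSpace.single i (1:ℝ)) : E →L[ℝ] ℝ) z)) := by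
      funext z
      rw [(aux_expY_hasFDerivAt β C z).fderiv]
      simp only [ContinuousLinearMap.smul_apply, innerSL_apply_apply, smul_eq_mul]
      rw [real_inner_comm]
    rw [hfun]
    have hprod := (aux_expY_hasFDerivAt β C y).fun_mul
      ((innerSL ℝ (EuclideanSpace.single i (1:ℝ)) : E →L[ℝ] ℝ).hasFDerivAt.const_mul β)
    rw [hprod.fderiv]
    have h11 : (⟪EuclideanSpace.single i (1:ℝ), EuclideanSpace.single i (1:ℝ)⟫ : ℝ) = 1 := by
      rw [aux_inner_single]; simp [EuclideanSpace.single_apply]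
    simp only [ContinuousLinearMap.add_apply, ContinuousLinearMap.smul_apply,
      ContinuousLinearMap.comp_apply, innerSL_apply_apply, smul_eq_mul, h11]
    have hy : (inner ℝ (EuclideanSpace.single i (1:ℝ)) y : ℝ) = y i := by
      rw [real_inner_comm]; exact aux_inner_single y i
    have hy2 : (inner ℝ y (EuclideanSpace.single i (1:ℝ)) : ℝ) = y i := aux_inner_single y i
    simp only [hy, hy2]
    ring
  unfold lap
  rw [Finset.sum_congr rfl fun i _ => key i, Finset.sum_add_distrib, Finset.sum_const]
  have h2 : ∑ i : Fin d, Real.exp (C + β * ‖y‖^2 / 2) * (β^2 * (y i)^2)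
      = Real.exp (C + β * ‖y‖^2 / 2) * β^2 * ∑ i, (y i)^2 := by
    rw [Finset.mul_sum]
    exact Finset.sum_congr rfl fun i _ => by ring
  rw [h2, aux_norm_sq_eq_sum]
  simp only [Finset.card_univ, Fintype.card_fin, nsmul_eq_mul]
  ring

theorem aux_gradX_exp {U : E → ℝ} (hU : ContDiff ℝ (⊤ : ℕ∞) U) (α C : ℝ) (x : E) :
    gradient (fun x => Real.exp (α * U x + C)) x
      = (Real.exp (α * U x + C) * α) • gradient U x := by
  have h : HasGradientAt (fun x => Real.exp (α * U x + C))
      ((Real.exp (α * U x + C) * α) • gradient U x) x := by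
    rw [hasGradientAt_iff_hasFDerivAt]
    refine (aux_expX_hasFDerivAt hU α C x).congr_fderiv ?_
    ext v
    simp only [InnerProductSpace.toDual_apply_apply, ContinuousLinearMap.smul_apply, smul_eq_mul,
      real_inner_smul_left]
    rw [aux_fderiv_eq_inner_gradient hU]
    ring
  exact h.gradient

theorem aux_gradY_exp (β C : ℝ) (y : E) :
    gradient (fun y : E => Real.exp (C + β * ‖y‖^2 / 2)) y
      = (Real.exp (C + β * ‖y‖^2 / 2) * β) • y := by
  have h : HasGradientAt (fun y : E => Real.exp (C + β * ‖y‖^2 / 2))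
      ((Real.exp (C + β * ‖y‖^2 / 2) * β) • y) y := by
    rw [hasGradientAt_iff_hasFDerivAt]
    refine (aux_expY_hasFDerivAt β C y).congr_fderiv ?_
    ext v
    simp only [InnerProductSpace.toDual_apply_apply, ContinuousLinearMap.smul_apply, smul_eq_mul,
      real_inner_smul_left, innerSL_apply_apply]
    ring
  exact h.gradient

theorem aux_lap_continuous {U : E → ℝ} (hU : ContDiff ℝ (⊤ : ℕ∞) U) : Continuous (lap U) := by
  have : lap U = fun x => ∑ i : Fin d,
      fderiv ℝ (fun z => fderiv ℝ U z (EuclideanSpace.single i 1)) x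
        (EuclideanSpace.single i 1) := rfl
  rw [this]
  refine continuous_finset_sum _ fun i _ => ?_
  have h1 : ContDiff ℝ (⊤ : ℕ∞) (fun z : E => fderiv ℝ U z (EuclideanSpace.single i 1)) :=
    (ContinuousLinearMap.apply ℝ ℝ (EuclideanSpace.single i (1:ℝ))).contDiff.comp
      (hU.fderiv_right (by simp))
  have h2 : Continuous (fderiv ℝ (fun z : E => fderiv ℝ U z (EuclideanSpace.single i 1))) :=
    (h1.fderiv_right (m := (⊤ : ℕ∞)) (by simp)).continuous
  exact (ContinuousLinearMap.apply ℝ ℝ (EuclideanSpace.single i (1:ℝ))).continuous.comp h2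

end Aux

set_option maxHeartbeats 1000000 in
theorem stmt_13 (η : ℝ) (hη : 0 ≤ η)
    (U : EuclideanSpace ℝ (Fin d) → ℝ) (hUsmooth : ContDiff ℝ (⊤ : ℕ∞) U) (hU1 : ∀ x, 1 ≤ U x)
    (hUint : Integrable (fun x => Real.exp (-U x)) volume)
    (κ c : ℝ) (hκ : κ ∈ Set.Ioo (0 : ℝ) 1) (hc : 0 < c)
    (R : ℝ)
    (hcond : ∀ x : EuclideanSpace ℝ (Fin d), R ≤ ‖x‖ →
      lap U x ≤ κ * ‖gradient U x‖ ^ 2 ∧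
        c * (U x) ^ (2 * η + 1) ≤ ‖gradient U x‖ ^ 2)
    (α β : ℝ) (hα : α ∈ Set.Ioo (0 : ℝ) (1 - κ)) (hβ : β ∈ Set.Ioo (0 : ℝ) 1)
    (W : EuclideanSpace ℝ (Fin d) × EuclideanSpace ℝ (Fin d) → ℝ)
    (hW : ∀ p, W p = Real.exp (α * U p.1 + β * ‖p.2‖ ^ 2 / 2)) :
    ∃ lam > (0 : ℝ), ∃ b > (0 : ℝ),
      ∀ p : EuclideanSpace ℝ (Fin d) × EuclideanSpace ℝ (Fin d),
        Leta η U W p ≤ -lam * Ham U p * W p + b := by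
  obtain ⟨hα0, hα1⟩ := hα
  obtain ⟨hβ0, hβ1⟩ := hβ
  obtain ⟨hκ0, hκ1⟩ := hκ
  -- the main identity
  have main_id : ∀ p : EuclideanSpace ℝ (Fin d) × EuclideanSpace ℝ (Fin d),
      Leta η U W p = W p * (α * (Ham U p) ^ (-(2*η)) *
        (lap U p.1 + (α - 2*η/Ham U p - 1) * ‖gradient U p.1‖^2)
        + β * ((d:ℝ) - (1-β)*‖p.2‖^2)) := by
    rintro ⟨x, y⟩
    have hWx : (fun x' => W (x', y)) = fun x' => Real.exp (α * U x' + β * ‖y‖^2/2) := by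
      funext x'; exact hW (x', y)
    have hWy : (fun y' => W (x, y')) = fun y' => Real.exp (α * U x + β * ‖y'‖^2/2) := by
      funext y'; exact hW (x, y')
    simp only [Leta, gradX, gradY]
    rw [hWx, hWy]
    rw [aux_lap_expX hUsmooth α (β * ‖y‖^2/2) x, aux_lap_expY β (α * U x) y,
      aux_gradX_exp hUsmooth α (β * ‖y‖^2/2) x, aux_gradY_exp β (α * U x) y]
    rw [hW (x, y)]
    simp only [inner_add_left, real_inner_smul_left, real_inner_smul_right,
      real_inner_self_eq_norm_sq]
    ring
  -- bound on the compact region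
  obtain ⟨A0, hA0⟩ :=
    (isCompact_closedBall (0 : EuclideanSpace ℝ (Fin d)) R).exists_bound_of_continuousOn
    (((aux_lap_continuous hUsmooth).abs.add hUsmooth.continuous.abs).continuousOn)
  obtain ⟨A, hA_eq⟩ : ∃ A : ℝ, max A0 0 = A := ⟨_, rfl⟩
  have hA_nonneg : 0 ≤ A := hA_eq ▸ le_max_right _ _
  have hA : ∀ x : EuclideanSpace ℝ (Fin d), ‖x‖ ≤ R → |lap U x| + |U x| ≤ A := by
    intro x hx
    have hmem : x ∈ Metric.closedBall (0 : EuclideanSpace ℝ (Fin d)) R := by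
      simpa [Metric.mem_closedBall, dist_zero_right] using hx
    have h := hA0 x hmem
    rw [Real.norm_eq_abs, abs_of_nonneg (add_nonneg (abs_nonneg _) (abs_nonneg _))] at h
    exact le_trans h (hA_eq ▸ le_max_left _ _)
  -- constants
  obtain ⟨ε, hε_eq⟩ : ∃ e : ℝ, 1 - κ - α = e := ⟨_, rfl⟩
  have hε : 0 < ε := by linarith only [hα1, hε_eq]
  obtain ⟨P, hP_eq⟩ : ∃ P : ℝ, (2:ℝ) ^ (2*η) = P := ⟨_, rfl⟩
  have hP : 0 < P := hP_eq ▸ Real.rpow_pos_of_pos (by norm_num) _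
  obtain ⟨Q, hQ_eq⟩ : ∃ q : ℝ, c / (2*P) = q := ⟨_, rfl⟩
  have hQ : 0 < Q := hQ_eq ▸ div_pos hc (by linarith only [hP])
  obtain ⟨lam0, hlam0_eq⟩ : ∃ l : ℝ, min (α * ε * Q) (β * (1-β)) = l := ⟨_, rfl⟩
  have hlam0 : 0 < lam0 :=
    hlam0_eq ▸ lt_min (mul_pos (mul_pos hα0 hε) hQ) (mul_pos hβ0 (by linarith only [hβ1]))
  have hlam0a : lam0 ≤ α * ε * Q := hlam0_eq ▸ min_le_left _ _
  have hlam0b : lam0 ≤ β * (1-β) := hlam0_eq ▸ min_le_right _ _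
  obtain ⟨C1, hC1_eq⟩ : ∃ C : ℝ, (α + lam0) * A + β * d + 1 = C := ⟨_, rfl⟩
  have hdnn : (0:ℝ) ≤ β * d := by positivity
  have hαlamA : (0:ℝ) ≤ (α + lam0) * A := mul_nonneg (by linarith) hA_nonneg
  have hC1 : 0 < C1 := by linarith only [hdnn, hαlamA, hC1_eq]
  have hβd_le : β * (d:ℝ) ≤ C1 := by linarith only [hαlamA, hC1_eq]
  -- the key pointwise estimate
  have claim : ∀ p : EuclideanSpace ℝ (Fin d) × EuclideanSpace ℝ (Fin d),
      α * (Ham U p) ^ (-(2*η)) *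
        (lap U p.1 + (α - 2*η/Ham U p - 1) * ‖gradient U p.1‖^2)
        + β * ((d:ℝ) - (1-β)*‖p.2‖^2) ≤ C1 - lam0 * Ham U p := by
    rintro ⟨x, y⟩
    dsimp only
    have hHval : Ham U (x, y) = U x + ‖y‖^2/2 := rfl
    have hGnn0 : (0:ℝ) ≤ ‖gradient U x‖^2 := by positivity
    have hYnn0 : (0:ℝ) ≤ ‖y‖^2 := by positivity
    obtain ⟨G, hGd⟩ : ∃ G, ‖gradient U x‖^2 = G := ⟨_, rfl⟩
    obtain ⟨Y, hYd⟩ : ∃ Y, ‖y‖^2 = Y := ⟨_, rfl⟩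
    obtain ⟨L, hLd⟩ : ∃ L, lap U x = L := ⟨_, rfl⟩
    obtain ⟨Ux, hUxd⟩ : ∃ u, U x = u := ⟨_, rfl⟩
    have hYnn : 0 ≤ Y := hYd ▸ hYnn0
    have hGnn : 0 ≤ G := hGd ▸ hGnn0
    have hUx1 : 1 ≤ Ux := hUxd ▸ hU1 x
    rw [hUxd, hYd] at hHval
    obtain ⟨H, hHd⟩ : ∃ H, Ham U (x, y) = H := ⟨_, rfl⟩
    rw [hHd] at hHval
    have hH1 : 1 ≤ H := by linarith only [hHval, hUx1, hYnn]
    have hHpos : 0 < H := by linarith only [hH1]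
    have hP2 : H ^ (-(2*η)) ≤ 1 := Real.rpow_le_one_of_one_le_of_nonpos hH1 (by linarith only [hη])
    have hP0 : 0 < H ^ (-(2*η)) := Real.rpow_pos_of_pos hHpos _
    have hdivnn : 0 ≤ 2*η/H := div_nonneg (by linarith only [hη]) hHpos.le
    by_cases hx : R ≤ ‖x‖
    · obtain ⟨h1, h2⟩ := hcond x hx
      rw [hGd, hLd] at h1
      rw [hGd, hUxd] at h2
      obtain ⟨t, htd⟩ : ∃ t, H ^ (-(2*η)) = t := ⟨_, rfl⟩
      rw [htd] at hP0 hP2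
      rw [hHd, hGd, hLd, hYd, htd]
      obtain ⟨D, hDd⟩ : ∃ D, 2*η/H = D := ⟨_, rfl⟩
      rw [hDd] at hdivnn ⊢
      have h4 : (α - D - 1) * G ≤ (α - 1) * G := by
        linarith only [mul_nonneg hdivnn hGnn]
      have hB : L + (α - D - 1) * G ≤ -ε * G := by
        rw [← hε_eq]; linarith only [h1, h4]
      have hαt : (0:ℝ) ≤ α * t := mul_nonneg hα0.le hP0.le
      have hmain : α * t * (L + (α - D - 1) * G) ≤ α * t * (-ε * G) :=
        mul_le_mul_of_nonneg_left hB hαt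
      by_cases hcase : H/2 ≤ Ux
      · -- potential energy dominates: use the gradient condition
        have hUpos : (0:ℝ) < H/2 := by linarith only [hHpos]
        have hrp : c * (H/2) ^ (2*η+1) ≤ c * Ux ^ (2*η+1) :=
          mul_le_mul_of_nonneg_left
            (Real.rpow_le_rpow hUpos.le hcase (by linarith only [hη])) hc.le
        have h4' : c * (H/2) ^ (2*η+1) ≤ G := le_trans hrp h2
        have e1 : ((H:ℝ)/2) ^ (2*η+1) = (H/2) ^ (2*η) * (H/2) := by
          rw [Real.rpow_add hUpos, Real.rpow_one]
        have e2 : ((H:ℝ)/2) ^ (2*η) = H ^ (2*η) / P := by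
          rw [← hP_eq]; exact Real.div_rpow hHpos.le (by norm_num) _
        have e3 : t * H ^ (2*η) = 1 := by
          rw [← htd, ← Real.rpow_add hHpos]
          have he : -(2*η) + 2*η = 0 := by ring
          rw [he, Real.rpow_zero]
        have h5 : t * (c * (H/2) ^ (2*η+1)) ≤ t * G := mul_le_mul_of_nonneg_left h4' hP0.le
        have e4 : t * (c * (H/2) ^ (2*η+1)) = c * (t * H ^ (2*η)) * H / (2*P) := by
          rw [e1, e2]; ring
        rw [e4, e3] at h5
        have e5 : c * 1 * H / (2*P) = Q * H := by rw [← hQ_eq]; ring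
        rw [e5] at h5
        have h7 : -(α * ε) * (t * G) ≤ -(α * ε) * (Q * H) := by
          have h7' := mul_le_mul_of_nonneg_left h5
            (mul_nonneg hα0.le hε.le)
          linarith only [h7']
        have h8 : lam0 * H ≤ (α * ε * Q) * H :=
          mul_le_mul_of_nonneg_right hlam0a hHpos.le
        have hYterm : (0:ℝ) ≤ β * (1-β) * Y :=
          mul_nonneg (mul_nonneg hβ0.le (by linarith only [hβ1])) hYnn
        linarith only [hmain, h7, h8, hYterm, hβd_le]
      · -- kinetic energy dominates
        have hYH : H ≤ Y := by
          have h := not_le.mp hcase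
          linarith only [hHval, h]
        have hB0 : α * t * (L + (α - D - 1) * G) ≤ 0 := by
          have h0 : (0:ℝ) ≤ α * ε * (t * G) :=
            mul_nonneg (mul_nonneg hα0.le hε.le) (mul_nonneg hP0.le hGnn)
          linarith only [hmain, h0]
        have hprod1 : β * (1-β) * H ≤ β * (1-β) * Y :=
          mul_le_mul_of_nonneg_left hYH (mul_nonneg hβ0.le (by linarith only [hβ1]))
        have hprod2 : lam0 * H ≤ β * (1-β) * H :=
          mul_le_mul_of_nonneg_right hlam0b hHpos.le
        linarith only [hB0, hβd_le, hprod1, hprod2]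
    · -- compact region
      push_neg at hx
      have hAx := hA x hx.le
      rw [hLd, hUxd] at hAx
      obtain ⟨t, htd⟩ : ∃ t, H ^ (-(2*η)) = t := ⟨_, rfl⟩
      rw [htd] at hP0 hP2
      rw [hHd, hGd, hLd, hYd, htd]
      obtain ⟨D, hDd⟩ : ∃ D, 2*η/H = D := ⟨_, rfl⟩
      rw [hDd] at hdivnn ⊢
      have hlapA : L ≤ A := by
        linarith only [le_abs_self L, abs_nonneg Ux, hAx]
      have hUA : Ux ≤ A := by
        linarith only [le_abs_self Ux, abs_nonneg L, hAx]
      have htlap : t * L ≤ A := by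
        rcases le_or_gt L 0 with h | h
        · have h' := mul_nonpos_of_nonneg_of_nonpos hP0.le h
          linarith only [h', hA_nonneg]
        · have h' := mul_le_mul_of_nonneg_right hP2 h.le
          linarith only [h', hlapA]
      have hcoef : α - D - 1 ≤ 0 := by linarith only [hdivnn, hα1, hκ0]
      have hcoefG : α * t * ((α - D - 1) * G) ≤ 0 :=
        mul_nonpos_of_nonneg_of_nonpos (mul_nonneg hα0.le hP0.le)
          (mul_nonpos_of_nonpos_of_nonneg hcoef hGnn)
      have hHle : H ≤ A + Y/2 := by linarith only [hHval, hUA]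
      have hlam : lam0 * H ≤ lam0 * (A + Y/2) := mul_le_mul_of_nonneg_left hHle hlam0.le
      have hprod3 : lam0 * Y ≤ β * (1-β) * Y := mul_le_mul_of_nonneg_right hlam0b hYnn
      have hprod4 : (0:ℝ) ≤ lam0 * Y := mul_nonneg hlam0.le hYnn
      have hsplit : α * t * (L + (α - D - 1) * G)
          = α * (t * L) + α * t * ((α - D - 1) * G) := by ring
      have hαtL : α * (t * L) ≤ α * A := mul_le_mul_of_nonneg_left htlap hα0.le
      rw [← hC1_eq]
      linarith only [hsplit, hαtL, hcoefG, hlam, hprod3, hprod4, hβd_le, hC1_eq]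
  -- choose the constants
  obtain ⟨m, hm_eq⟩ : ∃ m : ℝ, max α β = m := ⟨_, rfl⟩
  have hm0 : 0 < m := hm_eq ▸ lt_max_of_lt_left hα0
  have hmα : α ≤ m := hm_eq ▸ le_max_left _ _
  have hmβ : β ≤ m := hm_eq ▸ le_max_right _ _
  refine ⟨lam0/2, by linarith only [hlam0], Real.exp (m * (C1 / (lam0/2))) * C1,
    mul_pos (Real.exp_pos _) hC1, ?_⟩
  intro p
  rw [main_id p]
  have hcl := claim p
  have hH1 : 1 ≤ Ham U p := by
    have h1 := hU1 p.1
    have h2 : (0:ℝ) ≤ ‖p.2‖^2 := by positivity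
    simp only [Ham]
    linarith only [h1, h2]
  have hWpos : 0 < W p := by rw [hW p]; exact Real.exp_pos _
  have hWle : W p ≤ Real.exp (m * Ham U p) := by
    rw [hW p]
    apply Real.exp_le_exp.mpr
    have hU := hU1 p.1
    have hy2 : (0:ℝ) ≤ ‖p.2‖^2 := by positivity
    have hp1 : α * U p.1 ≤ m * U p.1 :=
      mul_le_mul_of_nonneg_right hmα (by linarith)
    have hp2 : β * ‖p.2‖^2 ≤ m * ‖p.2‖^2 := mul_le_mul_of_nonneg_right hmβ hy2
    simp only [Ham]
    linarith only [hp1, hp2]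
  obtain ⟨F, hFd⟩ : ∃ F, α * (Ham U p) ^ (-(2*η)) *
      (lap U p.1 + (α - 2*η/Ham U p - 1) * ‖gradient U p.1‖^2)
      + β * ((d:ℝ) - (1-β)*‖p.2‖^2) = F := ⟨_, rfl⟩
  rw [hFd] at hcl ⊢
  obtain ⟨Wp, hWd⟩ : ∃ w, W p = w := ⟨_, rfl⟩
  rw [hWd] at hWpos hWle ⊢
  obtain ⟨H, hHd⟩ : ∃ H, Ham U p = H := ⟨_, rfl⟩
  rw [hHd] at hcl hH1 hWle ⊢
  have hHpos : 0 < H := by linarith only [hH1]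
  have hF : F + (lam0/2) * H ≤ C1 - (lam0/2) * H := by linarith only [hcl]
  have hlamH : (0:ℝ) ≤ (lam0/2) * H := mul_nonneg (by linarith only [hlam0]) hHpos.le
  have hkey : Wp * (F + (lam0/2) * H) ≤ Real.exp (m * (C1 / (lam0/2))) * C1 := by
    rcases le_or_gt (C1 - (lam0/2) * H) 0 with h | h
    · have h1 : Wp * (F + (lam0/2) * H) ≤ 0 :=
        mul_nonpos_of_nonneg_of_nonpos hWpos.le (by linarith only [hF, h])
      have h2 : (0:ℝ) < Real.exp (m * (C1 / (lam0/2))) * C1 :=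
        mul_pos (Real.exp_pos _) hC1
      linarith only [h1, h2]
    · have hHle : H ≤ C1 / (lam0/2) := by
        rw [le_div_iff₀ (by linarith only [hlam0])]
        linarith only [h]
      have hexp : Real.exp (m * H) ≤ Real.exp (m * (C1 / (lam0/2))) :=
        Real.exp_le_exp.mpr (mul_le_mul_of_nonneg_left hHle hm0.le)
      calc Wp * (F + (lam0/2) * H) ≤ Wp * (C1 - (lam0/2) * H) :=
            mul_le_mul_of_nonneg_left (by linarith only [hF]) hWpos.le
        _ ≤ Real.exp (m * H) * (C1 - (lam0/2) * H) :=
            mul_le_mul_of_nonneg_right hWle h.le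
        _ ≤ Real.exp (m * (C1 / (lam0/2))) * (C1 - (lam0/2) * H) :=
            mul_le_mul_of_nonneg_right hexp h.le
        _ ≤ Real.exp (m * (C1 / (lam0/2))) * C1 :=
            mul_le_mul_of_nonneg_left (by linarith only [hlamH]) (Real.exp_nonneg _)
  have hring : Wp * (F + (lam0/2) * H) = Wp * F + (lam0/2) * H * Wp := by ring
  linarith only [hkey, hring]
end
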